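/- Davis–Kahan sin-theta bound: if A and A + Δ are symmetric d×d matrices, U and Û are d×r matrices whose columns are orthonormal eigenvectors corresponding to the top r eigenvalues of A and A + Δ respectively, and the gap δ = λ_r(A) − λ_{r+1}(A) is positive with ‖Δ‖₂ < δ/2, then ‖sin Θ(span(Û), span(U))‖_F ≤ √2 · ‖Δ‖₂·√r / (δ − 2‖Δ‖₂). -/

import Mathlib

open Matrix
open RealInnerProductSpace Finset

/-- identity cast from plain vectors to Euclidean space -/
def EV {d : ℕ} (x : Fin d → ℝ) : EuclideanSpace ℝ (Fin d) := WithLp.toLp 2 x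

@[simp] lemma EV_apply {d : ℕ} (x : Fin d → ℝ) (i : Fin d) : EV x i = x i := rfl

variable {d : ℕ}

lemma rinner_eq_dot (x y : EuclideanSpace ℝ (Fin d)) : ⟪x, y⟫ = x ⬝ᵥ y := by
  simp [PiLp.inner_apply, RCLike.inner_apply, dotProduct, mul_comm]

lemma transpose_eq_of_hermitian {M : Matrix (Fin d) (Fin d) ℝ} (hM : M.IsHermitian) :
    Mᵀ = M := by
  ext i j
  have := congr_fun (congr_fun hM.eq i) j
  simpa [Matrix.conjTranspose_apply] using this

lemma sym_inner (M : Matrix (Fin d) (Fin d) ℝ) (hM : M.IsHermitian)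
    (x y : EuclideanSpace ℝ (Fin d)) : ⟪EV (M *ᵥ x), y⟫ = ⟪x, EV (M *ᵥ y)⟫ := by
  rw [rinner_eq_dot, rinner_eq_dot]
  show (M *ᵥ x) ⬝ᵥ y = x ⬝ᵥ (M *ᵥ y)
  rw [Matrix.dotProduct_mulVec, ← transpose_eq_of_hermitian hM, Matrix.mulVec_transpose,
    transpose_eq_of_hermitian hM]

lemma opnorm_bound (M : Matrix (Fin d) (Fin d) ℝ) (x : EuclideanSpace ℝ (Fin d)) :
    ‖EV (M *ᵥ x)‖ ≤ ‖Matrix.toEuclideanCLM (𝕜 := ℝ) M‖ * ‖x‖ :=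
  (Matrix.toEuclideanCLM (𝕜 := ℝ) M).le_opNorm x

section Eig
variable {M : Matrix (Fin d) (Fin d) ℝ} {b : OrthonormalBasis (Fin d) ℝ (EuclideanSpace ℝ (Fin d))}
  {ν : Fin d → ℝ}

lemma coeff_zero_of_eig (hM : M.IsHermitian)
    (hb : ∀ i, EV (M *ᵥ b i) = ν i • b i) {v : EuclideanSpace ℝ (Fin d)} {c : ℝ}
    (hv : EV (M *ᵥ v) = c • v) {i : Fin d} (hne : ν i ≠ c) :
    ⟪b i, v⟫ = 0 := by
  have h3 := sym_inner M hM (b i) v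
  rw [hb i, hv, real_inner_smul_left, real_inner_smul_right] at h3
  have h4 : (ν i - c) * ⟪b i, v⟫ = 0 := by ring_nf; linarith [h3]
  rcases mul_eq_zero.mp h4 with h | h
  · exact absurd (sub_eq_zero.mp h) hne
  · exact h

lemma quadform_expand (hM : M.IsHermitian)
    (hb : ∀ i, EV (M *ᵥ b i) = ν i • b i) (v : EuclideanSpace ℝ (Fin d)) :
    ⟪v, EV (M *ᵥ v)⟫ = ∑ i, ν i * ⟪b i, v⟫ ^ 2 := by
  rw [← b.sum_inner_mul_inner v (EV (M *ᵥ v))]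
  refine Finset.sum_congr rfl fun i _ => ?_
  have h2 : ⟪b i, EV (M *ᵥ v)⟫ = ν i * ⟪b i, v⟫ := by
    rw [← sym_inner M hM (b i) v, hb i, real_inner_smul_left]
  rw [h2, real_inner_comm v (b i)]
  ring

lemma parseval (b : OrthonormalBasis (Fin d) ℝ (EuclideanSpace ℝ (Fin d)))
    (v : EuclideanSpace ℝ (Fin d)) :
    ‖v‖ ^ 2 = ∑ i, ⟪b i, v⟫ ^ 2 := by
  rw [← real_inner_self_eq_norm_sq, ← b.sum_inner_mul_inner v v]
  refine Finset.sum_congr rfl fun i _ => ?_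
  rw [real_inner_comm v (b i)]; ring

lemma inner_zero_of_mem_span {S : Finset (Fin d)} {v : EuclideanSpace ℝ (Fin d)}
    (hv : v ∈ Submodule.span ℝ (⇑b '' ↑S)) {i : Fin d} (hi : i ∉ S) :
    ⟪b i, v⟫ = 0 := by
  induction hv using Submodule.span_induction with
  | mem x hx =>
    obtain ⟨j, hj, rfl⟩ := hx
    have hij : i ≠ j := fun h => hi (h ▸ hj)
    simpa [hij] using (orthonormal_iff_ite.mp b.orthonormal i j)
  | zero => simp
  | add x y _ _ hx hy => rw [inner_add_right, hx, hy]; ring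
  | smul a x _ hx => rw [real_inner_smul_right, hx]; ring

lemma mem_span_of_inner_zero {S : Finset (Fin d)} {v : EuclideanSpace ℝ (Fin d)}
    (h : ∀ i, i ∉ S → ⟪b i, v⟫ = 0) :
    v ∈ Submodule.span ℝ (⇑b '' ↑S) := by
  have h0 : ∑ i ∈ S, ⟪b i, v⟫ • b i = ∑ i : Fin d, ⟪b i, v⟫ • b i :=
    Finset.sum_subset (Finset.subset_univ S) (fun i _ hi => by rw [h i hi, zero_smul])
  have hv : v = ∑ i ∈ S, ⟪b i, v⟫ • b i := by rw [h0, b.sum_repr']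
  rw [hv]
  exact Submodule.sum_mem _ fun i hi =>
    Submodule.smul_mem _ _ (Submodule.subset_span ⟨i, hi, rfl⟩)

lemma finrank_span_basis_subset (b : OrthonormalBasis (Fin d) ℝ (EuclideanSpace ℝ (Fin d)))
    (S : Finset (Fin d)) :
    Module.finrank ℝ (Submodule.span ℝ (⇑b '' ↑S)) = S.card := by
  rw [Set.image_eq_range]
  have h2 : (Set.range fun x : ↥(↑S : Set (Fin d)) => b ↑x)
      = Set.range (⇑b ∘ (Subtype.val : ↥(↑S : Set (Fin d)) → Fin d)) := rfl
  rw [h2, finrank_span_eq_card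
    (b.orthonormal.linearIndependent.comp _ Subtype.val_injective)]
  simp

end Eig

section Count
variable {d : ℕ}

lemma card_filter_perm (ν lam : Fin d → ℝ) (π : Equiv.Perm (Fin d)) (h : lam = ν ∘ π)
    (p : ℝ → Prop) [DecidablePred p] :
    (Finset.univ.filter fun i => p (ν i)).card
      = (Finset.univ.filter fun i => p (lam i)).card := by
  apply Finset.card_equiv π.symm
  intro i
  simp only [Finset.mem_filter, Finset.mem_univ, true_and, h, Function.comp_apply,
    Equiv.apply_symm_apply]

lemma card_filter_val_lt {k : ℕ} (hk : k ≤ d) :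
    ((Finset.univ : Finset (Fin d)).filter fun i => i.val < k).card = k := by
  have he : (Finset.univ : Finset (Fin d)).filter (fun i => i.val < k)
      = Finset.map (Fin.castLEEmb hk) Finset.univ := by
    ext i
    simp only [Finset.mem_filter, Finset.mem_univ, true_and, Finset.mem_map]
    constructor
    · intro hi
      exact ⟨⟨i.val, hi⟩, by ext; rfl⟩
    · rintro ⟨j, -, rfl⟩
      exact j.2
  rw [he, Finset.card_map, Finset.card_univ, Fintype.card_fin]

lemma card_filter_gt_le {lam : Fin d → ℝ} (hmono : Antitone lam) {k : ℕ} (hk : k < d) :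
    ((Finset.univ : Finset (Fin d)).filter fun i => lam ⟨k, hk⟩ < lam i).card ≤ k := by
  refine le_trans (Finset.card_le_card ?_) (le_of_eq (card_filter_val_lt hk.le))
  intro i hi
  rw [Finset.mem_filter] at hi ⊢
  refine ⟨Finset.mem_univ _, ?_⟩
  by_contra hik
  exact absurd (hmono (show (⟨k, hk⟩ : Fin d) ≤ i from Fin.mk_le_of_le_val (not_lt.mp hik)))
    (not_le.mpr hi.2)

lemma card_filter_ge_ge {lam : Fin d → ℝ} (hmono : Antitone lam) {k : ℕ} (hk : k < d) :
    k + 1 ≤ ((Finset.univ : Finset (Fin d)).filter fun i => lam ⟨k, hk⟩ ≤ lam i).card := by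
  refine le_trans (le_of_eq (card_filter_val_lt hk).symm) (Finset.card_le_card ?_)
  intro i hi
  rw [Finset.mem_filter] at hi ⊢
  refine ⟨Finset.mem_univ _, ?_⟩
  exact hmono (show i ≤ (⟨k, hk⟩ : Fin d) from Fin.le_def.mpr (Nat.lt_succ_iff.mp hi.2))
end Count

section Quad
variable {d : ℕ} {M : Matrix (Fin d) (Fin d) ℝ}
  {b : OrthonormalBasis (Fin d) ℝ (EuclideanSpace ℝ (Fin d))} {ν : Fin d → ℝ}

lemma quadform_le_of_coeffs (hM : M.IsHermitian)
    (hb : ∀ i, EV (M *ᵥ b i) = ν i • b i) {c : ℝ} {v : EuclideanSpace ℝ (Fin d)}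
    (hv : ∀ i, ¬ ν i ≤ c → ⟪b i, v⟫ = 0) :
    ⟪v, EV (M *ᵥ v)⟫ ≤ c * ‖v‖ ^ 2 := by
  rw [quadform_expand hM hb v, parseval b v, Finset.mul_sum]
  apply Finset.sum_le_sum
  intro i _
  by_cases hi : ν i ≤ c
  · nlinarith [sq_nonneg (⟪b i, v⟫ : ℝ)]
  · rw [hv i hi]; simp

lemma quadform_ge_of_coeffs (hM : M.IsHermitian)
    (hb : ∀ i, EV (M *ᵥ b i) = ν i • b i) {c : ℝ} {v : EuclideanSpace ℝ (Fin d)}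
    (hv : ∀ i, ¬ c ≤ ν i → ⟪b i, v⟫ = 0) :
    c * ‖v‖ ^ 2 ≤ ⟪v, EV (M *ᵥ v)⟫ := by
  rw [quadform_expand hM hb v, parseval b v, Finset.mul_sum]
  apply Finset.sum_le_sum
  intro i _
  by_cases hi : c ≤ ν i
  · nlinarith [sq_nonneg (⟪b i, v⟫ : ℝ)]
  · rw [hv i hi]; simp

lemma inner_zero_of_mem_span_gen {s : Set (EuclideanSpace ℝ (Fin d))}
    {v w : EuclideanSpace ℝ (Fin d)} (hw : w ∈ Submodule.span ℝ s)
    (h : ∀ x ∈ s, ⟪x, v⟫ = 0) : ⟪w, v⟫ = 0 := by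
  induction hw using Submodule.span_induction with
  | mem x hx => exact h x hx
  | zero => simp
  | add x y _ _ hx hy => rw [inner_add_left, hx, hy]; ring
  | smul a x _ hx => rw [real_inner_smul_left, hx]; ring

lemma finrank_span_orthonormal_subset {n : ℕ} {f : Fin n → EuclideanSpace ℝ (Fin d)}
    (hf : Orthonormal ℝ f) (S : Finset (Fin n)) :
    Module.finrank ℝ (Submodule.span ℝ (f '' ↑S)) = S.card := by
  rw [Set.image_eq_range]
  have h2 : (Set.range fun x : ↥(↑S : Set (Fin n)) => f ↑x)
      = Set.range (f ∘ (Subtype.val : ↥(↑S : Set (Fin n)) → Fin n)) := rfl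
  rw [h2, finrank_span_eq_card
    (hf.linearIndependent.comp _ Subtype.val_injective)]
  simp

end Quad

lemma weyl_aux {d : ℕ} (r : ℕ) (hd : r < d) (A Δ : Matrix (Fin d) (Fin d) ℝ)
    (hA : A.IsHermitian) (hM : (A + Δ).IsHermitian)
    (lamA lamM : Fin d → ℝ) (πA πM : Equiv.Perm (Fin d))
    (hlamA : lamA = hA.eigenvalues ∘ πA) (hmonoA : Antitone lamA)
    (hlamM : lamM = hM.eigenvalues ∘ πM) (hmonoM : Antitone lamM) :
    lamM ⟨r, hd⟩ ≤ lamA ⟨r, hd⟩ + ‖Matrix.toEuclideanCLM (𝕜 := ℝ) Δ‖ := by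
  classical
  set a := lamA ⟨r, hd⟩ with ha
  set s := lamM ⟨r, hd⟩ with hs
  set ε := ‖Matrix.toEuclideanCLM (𝕜 := ℝ) Δ‖ with hε
  set bA := hA.eigenvectorBasis with hbAdef
  set bM := hM.eigenvectorBasis with hbMdef
  have hbA : ∀ i, EV (A *ᵥ bA i) = hA.eigenvalues i • bA i :=
    fun i => congrArg EV (hA.mulVec_eigenvectorBasis i)
  have hbM : ∀ i, EV ((A + Δ) *ᵥ bM i) = hM.eigenvalues i • bM i :=
    fun i => congrArg EV (hM.mulVec_eigenvectorBasis i)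
  set SA := Submodule.span ℝ
    (⇑bA '' ↑(Finset.univ.filter fun i => hA.eigenvalues i ≤ a)) with hSAdef
  set SM := Submodule.span ℝ
    (⇑bM '' ↑(Finset.univ.filter fun i => s ≤ hM.eigenvalues i)) with hSMdef
  -- dimension of SA
  have hcardA : d - r ≤ (Finset.univ.filter fun i => hA.eigenvalues i ≤ a).card := by
    have hpart := Finset.card_filter_add_card_filter_not
      (s := (Finset.univ : Finset (Fin d))) (p := fun i => hA.eigenvalues i ≤ a)
    have hneg : (Finset.univ.filter fun i => ¬ (hA.eigenvalues i ≤ a))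
        = Finset.univ.filter fun i => a < hA.eigenvalues i := by
      ext i; simp [not_le]
    have hgt : (Finset.univ.filter fun i => a < hA.eigenvalues i).card ≤ r := by
      rw [card_filter_perm hA.eigenvalues lamA πA hlamA (fun x => a < x)]
      exact card_filter_gt_le hmonoA hd
    rw [hneg] at hpart
    rw [Finset.card_univ, Fintype.card_fin] at hpart
    omega
  have hcardM : r + 1 ≤ (Finset.univ.filter fun i => s ≤ hM.eigenvalues i).card := by
    rw [card_filter_perm hM.eigenvalues lamM πM hlamM (fun x => s ≤ x)]
    exact card_filter_ge_ge hmonoM hd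
  have hfinA : d - r ≤ Module.finrank ℝ SA := by
    rw [hSAdef, finrank_span_orthonormal_subset bA.orthonormal]; exact hcardA
  have hfinM : r + 1 ≤ Module.finrank ℝ SM := by
    rw [hSMdef, finrank_span_orthonormal_subset bM.orthonormal]; exact hcardM
  -- the two subspaces intersect nontrivially
  have hndis : ¬ Disjoint SA SM := by
    intro hdis
    have hle := Submodule.finrank_add_finrank_le_of_disjoint hdis
    rw [finrank_euclideanSpace_fin] at hle
    omega
  have hnbot : SA ⊓ SM ≠ ⊥ := fun h => hndis (disjoint_iff.mpr h)
  obtain ⟨x, hx, hx0⟩ := Submodule.exists_mem_ne_zero_of_ne_bot hnbot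
  rw [Submodule.mem_inf] at hx
  -- quadratic form bounds
  have hxA : ⟪x, EV (A *ᵥ x)⟫ ≤ a * ‖x‖ ^ 2 := by
    refine quadform_le_of_coeffs hA hbA fun i hi => ?_
    refine inner_zero_of_mem_span (S := Finset.univ.filter fun i => hA.eigenvalues i ≤ a)
      hx.1 ?_
    simp [hi]
  have hxM : s * ‖x‖ ^ 2 ≤ ⟪x, EV ((A + Δ) *ᵥ x)⟫ := by
    refine quadform_ge_of_coeffs hM hbM fun i hi => ?_
    refine inner_zero_of_mem_span (S := Finset.univ.filter fun i => s ≤ hM.eigenvalues i)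
      hx.2 ?_
    simp [hi]
  have hsplit : ⟪x, EV ((A + Δ) *ᵥ x)⟫ = ⟪x, EV (A *ᵥ x)⟫ + ⟪x, EV (Δ *ᵥ x)⟫ := by
    have h1 : (A + Δ) *ᵥ (x : Fin d → ℝ) = A *ᵥ x + Δ *ᵥ x := Matrix.add_mulVec _ _ _
    have h2 : EV ((A + Δ) *ᵥ x) = EV (A *ᵥ x) + EV (Δ *ᵥ x) := congrArg EV h1
    rw [h2, inner_add_right]
  have hxΔ : ⟪x, EV (Δ *ᵥ x)⟫ ≤ ε * ‖x‖ ^ 2 := by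
    have h1 := real_inner_le_norm x (EV (Δ *ᵥ x))
    have h2 := opnorm_bound Δ x
    nlinarith [norm_nonneg x, norm_nonneg (EV (Δ *ᵥ x))]
  have hxpos : 0 < ‖x‖ ^ 2 := by
    have hn : 0 < ‖x‖ := norm_pos_iff.mpr hx0
    positivity
  nlinarith [hxA, hxM, hxΔ, hsplit]


noncomputable def specNorm {d : ℕ} (A : Matrix (Fin d) (Fin d) ℝ) : ℝ :=
  ‖Matrix.toEuclideanCLM (𝕜 := ℝ) A‖

noncomputable def frobNorm {d r : ℕ} (M : Matrix (Fin d) (Fin r) ℝ) : ℝ :=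
  Real.sqrt (∑ i, ∑ j, (M i j) ^ 2)

set_option maxHeartbeats 1000000 in
/-- Davis–Kahan sin-theta bound: if the columns of U (resp. Uh) are orthonormal
eigenvectors for the top r eigenvalues of the symmetric matrix A (resp. A + Δ),
the gap δ = λ_r(A) − λ_{r+1}(A) is positive and ‖Δ‖₂ < δ/2, then
‖(I − Uh Uhᵀ) U‖_F ≤ √2 ‖Δ‖₂ √r / (δ − 2‖Δ‖₂). -/
theorem davis_kahan_sin_theta
    (d r : ℕ) (hr : 1 ≤ r) (hd : r < d)
    (A Δ : Matrix (Fin d) (Fin d) ℝ) (hA : A.IsHermitian) (hM : (A + Δ).IsHermitian)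
    (U Uh : Matrix (Fin d) (Fin r) ℝ)
    (hU : Uᵀ * U = 1) (hUh : Uhᵀ * Uh = 1)
    (lamA lamM : Fin d → ℝ) (πA πM : Equiv.Perm (Fin d))
    (hlamA : lamA = hA.eigenvalues ∘ πA) (hmonoA : Antitone lamA)
    (hlamM : lamM = hM.eigenvalues ∘ πM) (hmonoM : Antitone lamM)
    (hUeig : ∀ j : Fin r,
      A *ᵥ (fun i => U i j) = lamA (Fin.castLE hd.le j) • (fun i => U i j))
    (hUheig : ∀ j : Fin r,
      (A + Δ) *ᵥ (fun i => Uh i j) = lamM (Fin.castLE hd.le j) • (fun i => Uh i j))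
    (δgap : ℝ) (hδ : δgap = lamA ⟨r - 1, by omega⟩ - lamA ⟨r, hd⟩)
    (hδpos : 0 < δgap)
    (hΔsmall : specNorm Δ < δgap / 2) :
    frobNorm ((1 - Uh * Uhᵀ) * U)
      ≤ Real.sqrt 2 * specNorm Δ * Real.sqrt r / (δgap - 2 * specNorm Δ) := by

  classical
  set ε := specNorm Δ with hεdef
  have hεnn : (0 : ℝ) ≤ ε := norm_nonneg _
  set s := lamM ⟨r, hd⟩ with hsdef
  set bM := hM.eigenvectorBasis with hbMdef
  have hbM : ∀ i, EV ((A + Δ) *ᵥ bM i) = hM.eigenvalues i • bM i :=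
    fun i => congrArg EV (hM.mulVec_eigenvectorBasis i)
  have huh_eig : ∀ j : Fin r, EV ((A + Δ) *ᵥ (fun i => Uh i j)) =
      lamM (Fin.castLE hd.le j) • EV (fun i => Uh i j) := fun j => congrArg EV (hUheig j)
  -- orthonormality of the columns of Uh
  have hinner_uh : ∀ j j' : Fin r, ⟪EV (fun i => Uh i j), EV (fun i => Uh i j')⟫
      = (1 : Matrix (Fin r) (Fin r) ℝ) j j' := by
    intro j j'
    rw [rinner_eq_dot, ← hUh]
    simp [Matrix.mul_apply, dotProduct, Matrix.transpose_apply, EV_apply]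
  have huhON : Orthonormal ℝ (fun j : Fin r => EV (fun i => Uh i j)) := by
    rw [orthonormal_iff_ite]
    intro j j'
    rw [hinner_uh j j', Matrix.one_apply]
  -- the index sets
  set T : Finset (Fin d) := Finset.univ.filter (fun i => s < hM.eigenvalues i) with hTdef
  set TJ : Finset (Fin r) :=
    Finset.univ.filter (fun j => s < lamM (Fin.castLE hd.le j)) with hTJdef
  have hTcard : T.card = TJ.card := by
    rw [hTdef, card_filter_perm hM.eigenvalues lamM πM hlamM (fun x => s < x)]
    have hmap : (Finset.univ.filter fun i : Fin d => s < lamM i)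
        = TJ.map (Fin.castLEEmb hd.le) := by
      ext i
      simp only [Finset.mem_filter, Finset.mem_univ, true_and, Finset.mem_map]
      constructor
      · intro hi
        have hir : i.val < r := by
          by_contra hcon
          push_neg at hcon
          have hle : lamM i ≤ s :=
            hmonoM (show (⟨r, hd⟩ : Fin d) ≤ i from Fin.mk_le_of_le_val hcon)
          exact absurd hi (not_lt.mpr hle)
        refine ⟨⟨i.val, hir⟩, ?_, by ext; rfl⟩
        rw [hTJdef, Finset.mem_filter]
        refine ⟨Finset.mem_univ _, ?_⟩
        have hcast : Fin.castLE hd.le ⟨i.val, hir⟩ = i := by ext; rfl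
        rw [hcast]; exact hi
      · rintro ⟨j, hj, rfl⟩
        rw [hTJdef, Finset.mem_filter] at hj
        exact hj.2
    rw [hmap, Finset.card_map]
  -- span equality
  set G := Submodule.span ℝ (⇑bM '' ↑T) with hGdef
  set W := Submodule.span ℝ ((fun j : Fin r => EV (fun i => Uh i j)) '' ↑TJ) with hWdef
  have hWG : W = G := by
    have hle : W ≤ G := by
      rw [hWdef, Submodule.span_le]
      rintro x ⟨j, hj, rfl⟩
      apply mem_span_of_inner_zero (b := bM)
      intro i hi
      have hie : hM.eigenvalues i ≤ s := by
        by_contra hcon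
        exact hi (Finset.mem_filter.mpr ⟨Finset.mem_univ _, not_le.mp hcon⟩)
      have hj' : s < lamM (Fin.castLE hd.le j) := by
        have := hj
        rw [hTJdef] at this
        simp only [Finset.mem_coe, Finset.mem_filter] at this
        exact this.2
      exact coeff_zero_of_eig hM hbM (huh_eig j) (by linarith : hM.eigenvalues i ≠ _)
    refine Submodule.eq_of_le_of_finrank_le hle ?_
    rw [hGdef, hWdef, finrank_span_orthonormal_subset bM.orthonormal,
      finrank_span_orthonormal_subset huhON, hTcard]
  -- Weyl bound
  have hweyl : s ≤ lamA ⟨r, hd⟩ + ε :=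
    weyl_aux r hd A Δ hA hM lamA lamM πA πM hlamA hmonoA hlamM hmonoM
  have hδε : 0 < δgap - ε := by
    have : ε < δgap / 2 := hΔsmall
    linarith
  -- per-column bound
  have hcol : ∀ j : Fin r,
      ‖EV ((1 - Uh * Uhᵀ) *ᵥ (fun i => U i j))‖ * (δgap - ε) ≤ ε := by
    intro j
    set uj : Fin d → ℝ := fun i => U i j with hujdef
    set q : EuclideanSpace ℝ (Fin d) := EV ((1 - Uh * Uhᵀ) *ᵥ uj) with hqdef
    have hueq : A *ᵥ uj = lamA (Fin.castLE hd.le j) • uj := hUeig j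
    have hUhQ : Uhᵀ * (1 - Uh * Uhᵀ) = 0 := by
      rw [Matrix.mul_sub, Matrix.mul_one, ← Matrix.mul_assoc, hUh, Matrix.one_mul, sub_self]
    have hq0 : Uhᵀ *ᵥ ((1 - Uh * Uhᵀ) *ᵥ uj) = 0 := by
      rw [Matrix.mulVec_mulVec, hUhQ, Matrix.zero_mulVec]
    have hperp : ∀ z : Fin r → ℝ, ⟪q, EV (Uh *ᵥ z)⟫ = 0 := by
      intro z
      rw [hqdef, rinner_eq_dot]
      show ((1 - Uh * Uhᵀ) *ᵥ uj) ⬝ᵥ (Uh *ᵥ z) = 0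
      rw [Matrix.dotProduct_mulVec, ← Matrix.mulVec_transpose, hq0, zero_dotProduct]
    have hperp_uh : ∀ j' : Fin r, ⟪EV (fun i => Uh i j'), q⟫ = 0 := by
      intro j'
      rw [rinner_eq_dot]
      show (fun i => Uh i j') ⬝ᵥ ((1 - Uh * Uhᵀ) *ᵥ uj) = 0
      have := congr_fun hq0 j'
      simpa [Matrix.mulVec, dotProduct, Matrix.transpose_apply] using this
    have hcoeffG : ∀ i ∈ T, ⟪bM i, q⟫ = 0 := by
      intro i hi
      have hbMi : (bM i : EuclideanSpace ℝ (Fin d)) ∈ W := by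
        rw [hWG, hGdef]
        exact Submodule.subset_span (Set.mem_image_of_mem _ (Finset.mem_coe.mpr hi))
      refine inner_zero_of_mem_span_gen hbMi ?_
      rintro x ⟨j', hj', rfl⟩
      exact hperp_uh j'
    have hquad : ⟪q, EV ((A + Δ) *ᵥ q)⟫ ≤ s * ‖q‖ ^ 2 := by
      refine quadform_le_of_coeffs hM hbM (fun i hi => ?_)
      exact hcoeffG i (Finset.mem_filter.mpr ⟨Finset.mem_univ _, not_le.mp hi⟩)
    set c : Fin r → ℝ := Uhᵀ *ᵥ uj with hcdef
    have h1 : (1 - Uh * Uhᵀ) *ᵥ uj = uj - Uh *ᵥ c := by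
      rw [Matrix.sub_mulVec, Matrix.one_mulVec, hcdef, Matrix.mulVec_mulVec]
    have hMUh : (A + Δ) * Uh
        = Uh * Matrix.diagonal (fun j' : Fin r => lamM (Fin.castLE hd.le j')) := by
      ext i j'
      rw [Matrix.mul_apply, Matrix.mul_diagonal]
      have h := congr_fun (hUheig j') i
      simp only [Matrix.mulVec, dotProduct, Pi.smul_apply, smul_eq_mul] at h
      rw [h]; ring
    have hfn : (A + Δ) *ᵥ ((1 - Uh * Uhᵀ) *ᵥ uj)
        = (lamA (Fin.castLE hd.le j) • uj + Δ *ᵥ uj)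
          - Uh *ᵥ ((Matrix.diagonal fun j' : Fin r => lamM (Fin.castLE hd.le j')) *ᵥ c) := by
      rw [h1, Matrix.mulVec_sub]
      congr 1
      · rw [Matrix.add_mulVec, hueq]
      · rw [Matrix.mulVec_mulVec, hMUh, ← Matrix.mulVec_mulVec]
    have h5 : EV ((A + Δ) *ᵥ q)
        = lamA (Fin.castLE hd.le j) • EV uj + EV (Δ *ᵥ uj)
          - EV (Uh *ᵥ ((Matrix.diagonal fun j' : Fin r => lamM (Fin.castLE hd.le j')) *ᵥ c)) :=
      congrArg EV hfn
    have hfn2 : uj = ((1 - Uh * Uhᵀ) *ᵥ uj) + Uh *ᵥ c := by rw [h1]; abel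
    have h6 : EV uj = q + EV (Uh *ᵥ c) := congrArg EV hfn2
    have hip_u : ⟪q, EV uj⟫ = ‖q‖ ^ 2 := by
      rw [h6, inner_add_right, real_inner_self_eq_norm_sq, hperp c, add_zero]
    have hexp : ⟪q, EV ((A + Δ) *ᵥ q)⟫
        = lamA (Fin.castLE hd.le j) * ‖q‖ ^ 2 + ⟪q, EV (Δ *ᵥ uj)⟫ := by
      rw [h5, inner_sub_right, inner_add_right, real_inner_smul_right, hip_u,
        hperp ((Matrix.diagonal fun j' : Fin r => lamM (Fin.castLE hd.le j')) *ᵥ c), sub_zero]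
    have hUu : ⟪EV uj, EV uj⟫ = 1 := by
      rw [rinner_eq_dot]
      have h7 := congr_fun (congr_fun hU j) j
      simp only [Matrix.mul_apply, Matrix.transpose_apply, Matrix.one_apply_eq] at h7
      show uj ⬝ᵥ uj = 1
      simpa [dotProduct, hujdef] using h7
    have hnu : ‖EV uj‖ = 1 := by
      have h8 : ‖EV uj‖ ^ 2 = 1 := by rw [← real_inner_self_eq_norm_sq, hUu]
      nlinarith [norm_nonneg (EV uj)]
    have hΔu : ‖EV (Δ *ᵥ uj)‖ ≤ ε := by
      have h9 : ‖EV (Δ *ᵥ (EV uj))‖ ≤ ε * ‖EV uj‖ := opnorm_bound Δ (EV uj)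
      rw [hnu, mul_one] at h9
      exact h9
    have hin_bd : -(ε * ‖q‖) ≤ ⟪q, EV (Δ *ᵥ uj)⟫ := by
      have h10 := abs_real_inner_le_norm q (EV (Δ *ᵥ uj))
      rw [abs_le] at h10
      have h10' := mul_le_mul_of_nonneg_left hΔu (norm_nonneg q)
      linarith [h10.1]
    have hlj : lamA ⟨r - 1, by omega⟩ ≤ lamA (Fin.castLE hd.le j) := by
      apply hmonoA
      rw [Fin.le_def]
      have := j.2
      simp only [Fin.coe_castLE]
      omega
    have hkey : (δgap - ε) * ‖q‖ ^ 2 ≤ ε * ‖q‖ := by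
      have h11 : lamA (Fin.castLE hd.le j) * ‖q‖ ^ 2 + ⟪q, EV (Δ *ᵥ uj)⟫ ≤ s * ‖q‖ ^ 2 := by
        rw [← hexp]; exact hquad
      have hδle : δgap - ε ≤ lamA (Fin.castLE hd.le j) - s := by
        rw [hδ]; linarith [hweyl, hlj]
      have h12 := mul_le_mul_of_nonneg_right hδle (sq_nonneg ‖q‖)
      linarith [h11, hin_bd, h12]
    by_cases hq : ‖q‖ = 0
    · rw [hq, zero_mul]; exact hεnn
    · have hqpos : 0 < ‖q‖ := lt_of_le_of_ne (norm_nonneg q) (Ne.symm hq)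
      have h13 : (‖q‖ * (δgap - ε)) * ‖q‖ ≤ ε * ‖q‖ := by linarith [hkey]
      exact le_of_mul_le_mul_right h13 hqpos
  -- assemble the Frobenius norm bound
  have hfr : frobNorm ((1 - Uh * Uhᵀ) * U) ≤ Real.sqrt (r * (ε / (δgap - ε)) ^ 2) := by
    unfold frobNorm
    apply Real.sqrt_le_sqrt
    rw [Finset.sum_comm]
    have hterm : ∀ j : Fin r,
        ∑ i, ((1 - Uh * Uhᵀ) * U : Matrix (Fin d) (Fin r) ℝ) i j ^ 2
          ≤ (ε / (δgap - ε)) ^ 2 := by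
      intro j
      have hqle : ‖EV ((1 - Uh * Uhᵀ) *ᵥ (fun i => U i j))‖ ≤ ε / (δgap - ε) := by
        rw [le_div_iff₀ hδε]
        exact hcol j
      have hsq : ∑ i, ((1 - Uh * Uhᵀ) * U : Matrix (Fin d) (Fin r) ℝ) i j ^ 2
          = ‖EV ((1 - Uh * Uhᵀ) *ᵥ (fun i => U i j))‖ ^ 2 := by
        rw [← real_inner_self_eq_norm_sq, rinner_eq_dot]
        show _ = ((1 - Uh * Uhᵀ) *ᵥ (fun i => U i j)) ⬝ᵥ ((1 - Uh * Uhᵀ) *ᵥ (fun i => U i j))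
        refine Finset.sum_congr rfl (fun i _ => ?_)
        rw [sq]
        congr 1
      rw [hsq]
      have := pow_le_pow_left₀ (norm_nonneg _) hqle 2
      simpa using this
    refine le_trans (Finset.sum_le_sum (fun j (_ : j ∈ Finset.univ) => hterm j)) ?_
    rw [Finset.sum_const, Finset.card_univ, Fintype.card_fin, nsmul_eq_mul]
  have hrhs : Real.sqrt (r * (ε / (δgap - ε)) ^ 2)
      ≤ Real.sqrt 2 * ε * Real.sqrt r / (δgap - 2 * ε) := by
    have hδ2ε : 0 < δgap - 2 * ε := by
      have : ε < δgap / 2 := hΔsmall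
      linarith
    rw [Real.sqrt_mul (by positivity : (0:ℝ) ≤ (r:ℝ)), Real.sqrt_sq (by positivity)]
    have h12 : (1:ℝ) ≤ Real.sqrt 2 := by
      nlinarith [Real.sq_sqrt (by norm_num : (0:ℝ) ≤ 2), Real.sqrt_nonneg 2]
    have hfrac : ε / (δgap - ε) ≤ Real.sqrt 2 * ε / (δgap - 2 * ε) := by
      rw [div_le_div_iff₀ hδε hδ2ε]
      linarith [mul_nonneg (mul_nonneg (sub_nonneg.mpr h12) hεnn) hδε.le, sq_nonneg ε]
    calc Real.sqrt r * (ε / (δgap - ε))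
        ≤ Real.sqrt r * (Real.sqrt 2 * ε / (δgap - 2 * ε)) :=
          mul_le_mul_of_nonneg_left hfrac (Real.sqrt_nonneg r)
      _ = Real.sqrt 2 * ε * Real.sqrt r / (δgap - 2 * ε) := by ring
  exact hfr.trans hrhs
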